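/- Let X^(1), …, X^(m) be random vectors in ℝ^n, each taking finitely many values, on a common atomless probability space, and set S_i^(k) = Σ_{ν=1}^k X_i^(ν) with S^(0) = 0. Assume: (i) for each k, conditionally on S^(k−1), the vector X^(k) is negatively supermodular dependent (for every value s of S^(k−1) with positive probability, the conditional law of X^(k) given S^(k−1)=s is NSMD); (ii) for each k and each I ⊆ {1,…,n}, the conditional distribution of X_I^(k) given S^(k−1) depends only on S_I^(k−1); (iii) for each k and each I ⊆ {1,…,n}, the conditional law of X_I^(k) given S_I^(k−1) = s_I is stochastically increasing in s_I. Then S^(k) = (S_1^(k), …, S_n^(k)) is negatively supermodular dependent for every k ∈ {1,…,m}. -/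

import Mathlib

/-!
Induction on `k`, with `S = S^(k-1)`, `X = X^(k)`. Fix a bounded measurable supermodular `ψ`.
Conditioning on `S = s` and using (i), then (ii) for singletons, `E ψ(S + X) ≤ E g(S)` where
`g(s) = ∫ ψ d(⊗ᵢ ζᵢ(sᵢ))` and `ζᵢ(t)` is the conditional law of `Sᵢ + Xᵢ` given `Sᵢ = t`.
By (iii) for singletons, `ζᵢ(t)` is stochastically increasing in `t`, so all of them are
quantile transforms `Qᵢ(t, Uᵢ)` of one uniform vector `U` with `Qᵢ(t, u)` increasing in `t`;
hence `g(s) = E ψ((Qᵢ(sᵢ, Uᵢ))ᵢ)` is an average of supermodular functions of `s`, so it is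
supermodular. Only the finitely many values of `S` matter, so `g` may be precomposed with a
monotone retraction onto them, which makes it measurable, and the induction hypothesis gives
`E g(S) ≤ E g(S^⊥)`. Finally `E g(S^⊥)` is `E ψ` against the product of the mixtures
`∑ₜ P(Sᵢ = t) ζᵢ(t) = law(Sᵢ + Xᵢ)`.
-/

open MeasureTheory ProbabilityTheory
open scoped Classical

noncomputable section

/-- A random vector `X = (X_1,…,X_n)` is negatively supermodular dependent (NSMD)
under the probability measure `μ` : `E[ψ(X)] ≤ E[ψ(X^⊥)]` for every bounded
measurable supermodular `ψ`, where `X^⊥` has independent components with the same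
marginals as `X` (its law is the product of the marginal laws of `X`). -/
def IsNSMD {Ω : Type*} [MeasurableSpace Ω] (μ : Measure Ω) {n : ℕ}
    (X : Ω → Fin n → ℝ) : Prop :=
  ∀ ψ : (Fin n → ℝ) → ℝ, Measurable ψ → (∃ C, ∀ v, |ψ v| ≤ C) →
    (∀ x y : Fin n → ℝ, ψ x + ψ y ≤ ψ (x ⊔ y) + ψ (x ⊓ y)) →
    ∫ ω, ψ (X ω) ∂μ
      ≤ ∫ x, ψ x ∂(Measure.pi fun i => Measure.map (fun ω => X ω i) μ)

open Set

def IsSupermodular {α : Type*} [Lattice α] (f : α → ℝ) : Prop :=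
  ∀ x y, f x + f y ≤ f (x ⊔ y) + f (x ⊓ y)

lemma IsSupermodular.comp_pi_monotone {ι α β : Type*} [LinearOrder α] [LinearOrder β]
    {f : (ι → β) → ℝ} (hf : IsSupermodular f) {φ : ι → α → β} (hφ : ∀ i, Monotone (φ i)) :
    IsSupermodular fun x : ι → α => f fun i => φ i (x i) := by
  intro x y
  have hsup : (fun i => φ i ((x ⊔ y) i)) = (fun i => φ i (x i)) ⊔ fun i => φ i (y i) :=
    funext fun i => (hφ i).map_max
  have hinf : (fun i => φ i ((x ⊓ y) i)) = (fun i => φ i (x i)) ⊓ fun i => φ i (y i) :=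
    funext fun i => (hφ i).map_min
  simpa only [hsup, hinf] using hf _ _

lemma IsSupermodular.integral {α β : Type*} [Lattice α] [MeasurableSpace β] {P : Measure β}
    {F : β → α → ℝ} (hF : ∀ᵐ b ∂P, IsSupermodular (F b)) (hint : ∀ a, Integrable (F · a) P) :
    IsSupermodular fun a => ∫ b, F b a ∂P := by
  intro x y
  rw [← integral_add (hint x) (hint y), ← integral_add (hint _) (hint _)]
  exact integral_mono_ae ((hint x).add (hint y)) ((hint _).add (hint _))
    (hF.mono fun b hb => hb x y)

-- Only meaningful for `u ∈ (0, 1)`, where the set is nonempty and bounded below.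
def quantile (κ : Measure ℝ) (u : ℝ) : ℝ := sInf {x | u ≤ cdf κ x}

section Quantile

variable {κ : Measure ℝ} {u : ℝ}

lemma quantile_le_iff (hu : u ∈ Ioo 0 1) {x : ℝ} : quantile κ u ≤ x ↔ u ≤ cdf κ x := by
  have hne : {x | u ≤ cdf κ x}.Nonempty :=
    ((tendsto_order.1 (tendsto_cdf_atTop κ)).1 u hu.2).exists.imp fun _ h => h.le
  obtain ⟨x₀, hx₀⟩ := Filter.eventually_atBot.1 ((tendsto_order.1 (tendsto_cdf_atBot κ)).2 u hu.1)
  have hbdd : BddBelow {x | u ≤ cdf κ x} :=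
    ⟨x₀, fun y hy => le_of_not_gt fun hyx => (hx₀ y hyx.le).not_ge hy⟩
  refine ⟨fun h => ?_, fun h => csInf_le hbdd h⟩
  -- right-continuity of the cdf puts the infimum itself in the set
  have hq : u ≤ cdf κ (quantile κ u) := by
    refine ge_of_tendsto (((cdf κ).right_continuous _).mono_left
      (nhdsWithin_mono _ Ioi_subset_Ici_self)) ?_
    filter_upwards [self_mem_nhdsWithin] with x hx
    obtain ⟨a, ha, hax⟩ := exists_lt_of_csInf_lt hne hx
    exact ha.trans (monotone_cdf κ hax.le)
  exact hq.trans (monotone_cdf κ h)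

lemma quantile_le_quantile {κ' : Measure ℝ} (h : ⇑(cdf κ') ≤ ⇑(cdf κ)) (hu : u ∈ Ioo 0 1) :
    quantile κ u ≤ quantile κ' u :=
  (quantile_le_iff hu).2 <| ((quantile_le_iff hu).1 le_rfl).trans (h _)

lemma monotoneOn_quantile : MonotoneOn (quantile κ) (Ioo 0 1) := fun _ hu _ hv huv =>
  (quantile_le_iff hu).2 <| huv.trans ((quantile_le_iff hv).1 le_rfl)

instance : IsProbabilityMeasure (volume.restrict (Ioo (0 : ℝ) 1)) :=
  ⟨by simp⟩

lemma aemeasurable_quantile : AEMeasurable (quantile κ) (volume.restrict (Ioo 0 1)) :=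
  aemeasurable_restrict_of_monotoneOn measurableSet_Ioo monotoneOn_quantile

lemma map_quantile [IsProbabilityMeasure κ] :
    (volume.restrict (Ioo 0 1)).map (quantile κ) = κ := by
  refine Measure.ext_of_Iic _ _ fun x => ?_
  rw [Measure.map_apply_of_aemeasurable aemeasurable_quantile measurableSet_Iic,
    Measure.restrict_apply' measurableSet_Ioo, ← ofReal_cdf]
  have hset : quantile κ ⁻¹' Iic x ∩ Ioo 0 1 = Ioo 0 1 ∩ Iic (cdf κ x) := by
    ext u
    simp only [mem_inter_iff, mem_preimage, mem_Iic]
    exact ⟨fun h => ⟨h.2, (quantile_le_iff h.2).1 h.1⟩, fun h => ⟨(quantile_le_iff h.1).2 h.2, h.1⟩⟩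
  rw [hset]
  refine le_antisymm ?_ ?_
  · calc volume (Ioo 0 1 ∩ Iic (cdf κ x)) ≤ volume (Icc 0 (cdf κ x)) :=
          measure_mono fun u hu => ⟨hu.1.1.le, hu.2⟩
      _ = _ := by rw [Real.volume_Icc, sub_zero]
  · calc ENNReal.ofReal (cdf κ x) = volume (Ioo 0 (cdf κ x)) := by rw [Real.volume_Ioo, sub_zero]
      _ ≤ volume (Ioo 0 1 ∩ Iic (cdf κ x)) := measure_mono fun u hu =>
          ⟨⟨hu.1, hu.2.trans_le (cdf_le_one κ x)⟩, hu.2.le⟩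

end Quantile

lemma cdf_map_const_add (ν : Measure ℝ) [IsProbabilityMeasure ν] (c x : ℝ) :
    cdf (ν.map (c + ·)) x = cdf ν (x - c) := by
  have := Measure.isProbabilityMeasure_map (μ := ν) (measurable_const_add c).aemeasurable
  rw [cdf_eq_real, cdf_eq_real, map_measureReal_apply (measurable_const_add c) measurableSet_Iic,
    preimage_const_add_Iic]

lemma antitoneOn_cdf_map_const_add {κ : ℝ → Measure ℝ} {T : Set ℝ}
    (hκ : ∀ t ∈ T, IsProbabilityMeasure (κ t)) (h : AntitoneOn (fun t => ⇑(cdf (κ t))) T) :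
    AntitoneOn (fun t => ⇑(cdf ((κ t).map (t + ·)))) T := by
  intro t ht t' ht' htt' x
  have := hκ t ht
  have := hκ t' ht'
  simp only [cdf_map_const_add]
  exact (h ht ht' htt' _).trans (monotone_cdf _ (by linarith))

lemma cdf_le_cdf_of_integral_le {ν ν' : Measure ℝ} [IsProbabilityMeasure ν]
    [IsProbabilityMeasure ν']
    (h : ∀ φ : ℝ → ℝ, Monotone φ → (∃ C, ∀ x, |φ x| ≤ C) → ∫ x, φ x ∂ν ≤ ∫ x, φ x ∂ν') :
    ⇑(cdf ν') ≤ ⇑(cdf ν) := by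
  intro x
  have hφ : Monotone ((Ioi x).indicator (1 : ℝ → ℝ)) := fun y z hyz => by
    by_cases hy : x < y
    · simp [hy, hy.trans_le hyz]
    · by_cases hz : x < z <;> simp [hy, hz]
  have := h _ hφ ⟨1, fun y => by by_cases hy : y ∈ Ioi x <;> simp [hy]⟩
  rw [integral_indicator_one measurableSet_Ioi, integral_indicator_one measurableSet_Ioi,
    ← compl_Iic, probReal_compl_eq_one_sub measurableSet_Iic,
    probReal_compl_eq_one_sub measurableSet_Iic] at this
  rw [cdf_eq_real, cdf_eq_real]
  linarith

theorem IsSupermodular.integral_pi {ι : Type*} [Fintype ι] {η : ι → ℝ → Measure ℝ}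
    [∀ i t, IsProbabilityMeasure (η i t)] (hη : ∀ i, Antitone fun t => ⇑(cdf (η i t)))
    {ψ : (ι → ℝ) → ℝ} (hψ : IsSupermodular ψ) (hψm : Measurable ψ) {C : ℝ}
    (hψb : ∀ x, |ψ x| ≤ C) :
    IsSupermodular fun s : ι → ℝ => ∫ x, ψ x ∂(Measure.pi fun i => η i (s i)) := by
  set U := Measure.pi fun _ : ι => volume.restrict (Ioo (0 : ℝ) 1)
  have hQ (s : ι → ℝ) : AEMeasurable (fun u i => quantile (η i (s i)) (u i)) U :=
    aemeasurable_pi_lambda _ fun i =>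
      aemeasurable_quantile.comp_quasiMeasurePreserving (Measure.quasiMeasurePreserving_eval _ i)
  -- couple all the `η i t` through the quantile transform of one uniform vector
  have hcoupling (s : ι → ℝ) : ∫ x, ψ x ∂(Measure.pi fun i => η i (s i))
      = ∫ u, ψ (fun i => quantile (η i (s i)) (u i)) ∂U := by
    rw [← integral_map (hQ s) hψm.aestronglyMeasurable,
      Measure.pi_map_pi fun i => aemeasurable_quantile]
    simp only [map_quantile]
  have hbox : ∀ᵐ u ∂U, ∀ i, u i ∈ Ioo 0 1 := ae_all_iff.2 fun i =>
    Measure.tendsto_eval_ae_ae.eventually (ae_restrict_mem measurableSet_Ioo)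
  simp only [hcoupling]
  refine IsSupermodular.integral (hbox.mono fun u hu => hψ.comp_pi_monotone
    (φ := fun i t => quantile (η i t) (u i)) fun i _ _ htt' => quantile_le_quantile (hη i htt') (hu i))
    fun s => ?_
  exact Integrable.of_bound (hψm.comp_aemeasurable (hQ s)).aestronglyMeasurable C
    (ae_of_all _ fun u => hψb _)

lemma Finset.exists_monotone_retraction {α : Type*} [LinearOrder α] {T : Finset α}
    (hT : T.Nonempty) : ∃ r : α → α, Monotone r ∧ (∀ t, r t ∈ T) ∧ ∀ t ∈ T, r t = t := by
  let L (t : α) : Finset α := insert (T.min' hT) (T.filter (· ≤ t))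
  have hLT (t : α) : L t ⊆ T := Finset.insert_subset (T.min'_mem hT) (Finset.filter_subset _ _)
  refine ⟨fun t => (L t).max' (Finset.insert_nonempty _ _), fun t t' htt' => ?_,
    fun t => hLT t (Finset.max'_mem _ _), fun t ht => ?_⟩
  · exact Finset.max'_subset _ (Finset.insert_subset_insert _
      (Finset.monotone_filter_right _ fun _ _ h => h.trans htt'))
  · refine le_antisymm (Finset.max'_le _ _ _ fun y hy => ?_) (Finset.le_max' _ _ ?_)
    · rcases Finset.mem_insert.1 hy with rfl | hy
      · exact T.min'_le t ht
      · exact (Finset.mem_filter.1 hy).2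
    · exact Finset.mem_insert_of_mem (Finset.mem_filter.2 ⟨ht, le_rfl⟩)

lemma Measurable.comp_of_finite_range {α β γ : Type*} [MeasurableSpace α] [MeasurableSpace β]
    [MeasurableSpace γ] [MeasurableSingletonClass β] {f : α → β} (hf : Measurable f)
    (hfin : (range f).Finite) (g : β → γ) : Measurable (g ∘ f) := by
  have := hfin.to_subtype
  exact (measurable_of_finite fun b : range f => g b).comp
    (hf.subtype_mk (h := mem_range_self))

lemma exists_isSupermodular_extension {ι : Type*} [Fintype ι] [DecidableEq ι]
    {T : ι → Finset ℝ} (hT : ∀ i, (T i).Nonempty) {ζ : ι → ℝ → Measure ℝ}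
    (hζ_prob : ∀ i, ∀ t ∈ T i, IsProbabilityMeasure (ζ i t))
    (hζ : ∀ i, AntitoneOn (fun t => ⇑(cdf (ζ i t))) (T i)) {ψ : (ι → ℝ) → ℝ}
    (hψ : IsSupermodular ψ) (hψm : Measurable ψ) {C : ℝ} (hψb : ∀ x, |ψ x| ≤ C) :
    ∃ g : (ι → ℝ) → ℝ, IsSupermodular g ∧ Measurable g ∧ (∀ s, |g s| ≤ C) ∧
      ∀ s, (∀ i, s i ∈ T i) → ∫ x, ψ x ∂(Measure.pi fun i => ζ i (s i)) = g s := by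
  choose r hr_mono hr_mem hr_fix using fun i => Finset.exists_monotone_retraction (hT i)
  have : ∀ i t, IsProbabilityMeasure (ζ i (r i t)) := fun i t => hζ_prob i _ (hr_mem i t)
  let G (p : ι → ℝ) : ℝ := ∫ x, ψ x ∂(Measure.pi fun i => ζ i (p i))
  let R (s : ι → ℝ) (i : ι) : ℝ := r i (s i)
  have hRfin : (range R).Finite := (Fintype.piFinset T).finite_toSet.subset <| by
    rintro _ ⟨s, rfl⟩
    exact Fintype.mem_piFinset.2 fun i => hr_mem i (s i)
  refine ⟨G ∘ R, IsSupermodular.integral_pi (η := fun i t => ζ i (r i t))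
    (fun i t t' htt' => hζ i (hr_mem i t) (hr_mem i t') (hr_mono i htt')) hψ hψm hψb,
    Measurable.comp_of_finite_range (measurable_pi_lambda _ fun i =>
      (hr_mono i).measurable.comp (measurable_pi_apply i)) hRfin G, fun s => ?_, fun s hs => ?_⟩
  · simpa using norm_integral_le_of_norm_le_const (μ := Measure.pi fun i => ζ i (r i (s i)))
      (f := ψ) (ae_of_all _ hψb)
  · simp only [Function.comp_apply, G, R, hr_fix _ _ (hs _)]

lemma integral_finset_sum_smul_measure {α ι : Type*} [MeasurableSpace α] {s : Finset ι}
    {c : ι → ENNReal} {ν : ι → Measure α} {f : α → ℝ} (hc : ∀ b ∈ s, c b ≠ ⊤)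
    (hf : ∀ b ∈ s, Integrable f (ν b)) :
    ∫ x, f x ∂(∑ b ∈ s, c b • ν b) = ∑ b ∈ s, (c b).toReal * ∫ x, f x ∂(ν b) := by
  rw [integral_finsetSum_measure fun b hb => (hf b hb).smul_measure (hc b hb)]
  simp only [integral_smul_measure, smul_eq_mul]

lemma MeasureTheory.Measure.pi_dirac {ι : Type*} [Fintype ι] {α : ι → Type*}
    [∀ i, MeasurableSpace (α i)] (x : ∀ i, α i) :
    Measure.pi (fun i => Measure.dirac (x i)) = Measure.dirac x := by
  refine Measure.pi_eq fun s hs => ?_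
  rw [Measure.dirac_apply' _ (MeasurableSet.univ_pi hs)]
  simp [Measure.dirac_apply' _ (hs _), Set.indicator_apply, Finset.prod_boole]

lemma MeasureTheory.Measure.pi_finset_sum {ι : Type*} [Fintype ι] [DecidableEq ι]
    {α β : ι → Type*} [∀ i, MeasurableSpace (α i)] {T : ∀ i, Finset (β i)}
    {c : ∀ i, β i → ENNReal} {η : ∀ i, β i → Measure (α i)} [∀ i b, SigmaFinite (η i b)]
    {ν : ∀ i, Measure (α i)} [∀ i, SigmaFinite (ν i)] (hν : ∀ i, ν i = ∑ b ∈ T i, c i b • η i b) :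
    Measure.pi ν = ∑ b ∈ Fintype.piFinset T, (∏ i, c i (b i)) • Measure.pi fun i => η i (b i) := by
  refine Measure.pi_eq fun s hs => ?_
  simp only [hν, Measure.coe_finsetSum, Finset.sum_apply, Measure.coe_smul, Pi.smul_apply,
    smul_eq_mul, Measure.pi_pi, ← Finset.prod_mul_distrib]
  exact (Finset.prod_univ_sum T fun i b => c i b * η i b (s i)).symm

section FiniteRange

variable {Ω α β : Type*} [MeasurableSpace Ω] {μ : Measure Ω} {X : Ω → α}

lemma exists_finset_ae_mem_iff_measure_ne_zero (hX : (range X).Finite) :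
    ∃ R : Finset α, (∀ a, a ∈ R ↔ μ (X ⁻¹' {a}) ≠ 0) ∧ ∀ᵐ ω ∂μ, X ω ∈ R := by
  have hfin : {a | μ (X ⁻¹' {a}) ≠ 0}.Finite := hX.subset fun a ha => by
    by_contra h
    exact ha (by rw [preimage_singleton_eq_empty.2 h, measure_empty])
  refine ⟨hfin.toFinset, fun a => hfin.mem_toFinset, ?_⟩
  simp only [Finite.mem_toFinset, ae_iff]
  refine measure_mono_null (t := ⋃ a ∈ {a ∈ range X | μ (X ⁻¹' {a}) = 0}, X ⁻¹' {a})
    (fun ω (hω : ¬μ (X ⁻¹' {X ω}) ≠ 0) => mem_biUnion ⟨mem_range_self ω, not_not.1 hω⟩ rfl) ?_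
  exact (measure_biUnion_null_iff (hX.subset (sep_subset _ _)).countable).2 fun a ha => ha.2

variable [MeasurableSpace α] [MeasurableSpace β] [MeasurableSingletonClass α] [IsFiniteMeasure μ]

lemma sum_measure_smul_cond_preimage (hX : Measurable X) {R : Finset α}
    (hR : ∀ᵐ ω ∂μ, X ω ∈ R) : ∑ a ∈ R, μ (X ⁻¹' {a}) • μ[|X ⁻¹' {a}] = μ := by
  ext E hE
  simp only [Measure.coe_finsetSum, Finset.sum_apply, Measure.coe_smul, Pi.smul_apply,
    smul_eq_mul]
  simp_rw [mul_comm (μ _), cond_mul_eq_inter (hX (measurableSet_singleton _))]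
  rw [← measure_biUnion_finset (fun a _ b _ hab => ((disjoint_singleton.2 hab).preimage X).mono
    inter_subset_left inter_subset_left) fun a _ => (hX (measurableSet_singleton a)).inter hE]
  have : ⋃ a ∈ R, X ⁻¹' {a} ∩ E = X ⁻¹' R ∩ E := by ext; simp
  rw [this, inter_comm]
  exact measure_inter_conull (ae_iff.1 hR)

lemma map_eq_sum_smul_map_cond (hX : Measurable X) {R : Finset α} (hR : ∀ᵐ ω ∂μ, X ω ∈ R)
    {Y : Ω → β} (hY : Measurable Y) :
    μ.map Y = ∑ a ∈ R, μ (X ⁻¹' {a}) • (μ[|X ⁻¹' {a}]).map Y := by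
  conv_lhs => rw [← sum_measure_smul_cond_preimage hX hR]
  rw [Measure.map_finset_sum hY.aemeasurable]
  simp only [Measure.map_smul]

lemma map_cond_preimage_singleton (hX : Measurable X) {a : α} (ha : μ (X ⁻¹' {a}) ≠ 0) :
    (μ[|X ⁻¹' {a}]).map X = Measure.dirac a := by
  have := cond_isProbabilityMeasure ha
  have hXa : X =ᵐ[μ[|X ⁻¹' {a}]] fun _ => a :=
    (ae_cond_mem (hX (measurableSet_singleton a))).mono fun _ h => h
  rw [Measure.map_congr hXa, Measure.map_const, measure_univ, one_smul]

lemma map_eq_sum_dirac (hX : Measurable X) {R : Finset α} (hR : ∀ᵐ ω ∂μ, X ω ∈ R) :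
    μ.map X = ∑ a ∈ R, μ (X ⁻¹' {a}) • Measure.dirac a := by
  rw [map_eq_sum_smul_map_cond hX hR hX]
  refine Finset.sum_congr rfl fun a _ => ?_
  by_cases ha : μ (X ⁻¹' {a}) = 0
  · simp [ha]
  · rw [map_cond_preimage_singleton hX ha]

end FiniteRange

lemma map_add_cond_preimage_singleton {Ω : Type*} [MeasurableSpace Ω] {μ : Measure Ω}
    {Z W : Ω → ℝ} (hZ : Measurable Z) (hW : Measurable W) (t : ℝ) :
    (μ[|Z ⁻¹' {t}]).map (fun ω => Z ω + W ω) = ((μ[|Z ⁻¹' {t}]).map W).map (t + ·) := by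
  rw [Measure.map_map (measurable_const_add t) hW]
  exact Measure.map_congr ((ae_cond_mem (hZ (measurableSet_singleton t))).mono fun ω h => by
    simp only [mem_preimage, mem_singleton_iff] at h
    simp [h])

lemma isNSMD_const {Ω : Type*} [MeasurableSpace Ω] (μ : Measure Ω) [IsProbabilityMeasure μ]
    {n : ℕ} (c : Fin n → ℝ) : IsNSMD μ fun _ => c := by
  intro ψ _ _ _
  simp [Measure.map_const, Measure.pi_dirac]

lemma setOf_forall_mem_singleton_eq {Ω : Type*} {n : ℕ} (S : Ω → Fin n → ℝ) (i : Fin n)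
    (s : Fin n → ℝ) : {ω | ∀ j ∈ ({i} : Finset (Fin n)), S ω j = s j} = (S · i) ⁻¹' {s i} := by
  ext
  simp

section PartialSums

variable {Ω : Type*} [MeasurableSpace Ω] {μ : Measure Ω} {n : ℕ} {S X : Ω → Fin n → ℝ}

/-- The conditional law of `S_i + X_i` given `S_i = t`. -/
def condLawAdd (μ : Measure Ω) (S X : Ω → Fin n → ℝ) (i : Fin n) (t : ℝ) : Measure ℝ :=
  ((μ[|(S · i) ⁻¹' {t}]).map (X · i)).map (t + ·)

instance [IsFiniteMeasure μ] (i : Fin n) (t : ℝ) : IsFiniteMeasure (condLawAdd μ S X i t) := by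
  unfold condLawAdd
  infer_instance

lemma integral_comp_add_cond_le_integral_pi (hSm : Measurable S) {s : Fin n → ℝ}
    (hcond : IsNSMD μ[|S ⁻¹' {s}] X)
    (hdep : ∀ i, (μ[|S ⁻¹' {s}]).map (X · i) = (μ[|(S · i) ⁻¹' {s i}]).map (X · i))
    {ψ : (Fin n → ℝ) → ℝ} (hψm : Measurable ψ) {C : ℝ} (hψb : ∀ x, |ψ x| ≤ C)
    (hψ : IsSupermodular ψ) :
    ∫ ω, ψ ((S + X) ω) ∂μ[|S ⁻¹' {s}]
      ≤ ∫ x, ψ x ∂(Measure.pi fun i => condLawAdd μ S X i (s i)) := by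
  have hae : ∀ᵐ ω ∂μ[|S ⁻¹' {s}], ψ ((S + X) ω) = ψ (s + X ω) :=
    (ae_cond_mem (hSm (measurableSet_singleton s))).mono fun ω h => by
      rw [Pi.add_apply, mem_preimage.1 h]
  have hshift : Measurable fun (x : Fin n → ℝ) (i : Fin n) => s i + x i := measurable_const_add s
  rw [integral_congr_ae hae]
  simp only [condLawAdd, ← hdep]
  rw [← Measure.pi_map_pi fun i => (measurable_const_add (s i)).aemeasurable,
    integral_map hshift.aemeasurable hψm.aestronglyMeasurable]
  exact hcond (fun x => ψ (s + x)) (hψm.comp (measurable_const_add s)) ⟨C, fun x => hψb _⟩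
    (hψ.comp_pi_monotone fun i => monotone_id.const_add (s i))

lemma integral_comp_add_le_integral_comp [IsFiniteMeasure μ] (hSm : Measurable S)
    (hXm : Measurable X) (hSfin : (range S).Finite)
    (hcond : ∀ s, μ (S ⁻¹' {s}) ≠ 0 → IsNSMD μ[|S ⁻¹' {s}] X)
    (hdep : ∀ s, μ (S ⁻¹' {s}) ≠ 0 → ∀ i,
      (μ[|S ⁻¹' {s}]).map (X · i) = (μ[|(S · i) ⁻¹' {s i}]).map (X · i))
    {ψ : (Fin n → ℝ) → ℝ} (hψm : Measurable ψ) {C : ℝ} (hψb : ∀ x, |ψ x| ≤ C)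
    (hψ : IsSupermodular ψ) {g : (Fin n → ℝ) → ℝ} (hgm : Measurable g)
    (hg : ∀ s, μ (S ⁻¹' {s}) ≠ 0 →
      ∫ x, ψ x ∂(Measure.pi fun i => condLawAdd μ S X i (s i)) = g s) :
    ∫ ω, ψ ((S + X) ω) ∂μ ≤ ∫ ω, g (S ω) ∂μ := by
  obtain ⟨R, hR, hR_ae⟩ := exists_finset_ae_mem_iff_measure_ne_zero (μ := μ) hSfin
  calc ∫ ω, ψ ((S + X) ω) ∂μ
      = ∑ s ∈ R, (μ (S ⁻¹' {s})).toReal * ∫ ω, ψ ((S + X) ω) ∂μ[|S ⁻¹' {s}] := by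
        conv_lhs => rw [← sum_measure_smul_cond_preimage hSm hR_ae]
        exact integral_finset_sum_smul_measure (fun _ _ => measure_ne_top _ _) fun _ _ =>
          Integrable.of_bound (hψm.comp (hSm.add hXm)).aestronglyMeasurable C
            (ae_of_all _ fun _ => hψb _)
    _ ≤ ∑ s ∈ R, (μ (S ⁻¹' {s})).toReal * g s := by
        refine Finset.sum_le_sum fun s hs => mul_le_mul_of_nonneg_left ?_ ENNReal.toReal_nonneg
        rw [← hg s ((hR s).1 hs)]
        exact integral_comp_add_cond_le_integral_pi hSm (hcond s ((hR s).1 hs))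
          (hdep s ((hR s).1 hs)) hψm hψb hψ
    _ = ∫ ω, g (S ω) ∂μ := by
        rw [← integral_map hSm.aemeasurable hgm.aestronglyMeasurable, map_eq_sum_dirac hSm hR_ae,
          integral_finset_sum_smul_measure (fun _ _ => measure_ne_top _ _)
            fun _ _ => integrable_dirac enorm_lt_top]
        simp only [integral_dirac]

lemma integral_pi_map_eq_integral_pi_map_add [IsFiniteMeasure μ] (hSm : Measurable S)
    (hXm : Measurable X) {T : Fin n → Finset ℝ} (hT : ∀ i, ∀ᵐ ω ∂μ, S ω i ∈ T i)
    {ψ : (Fin n → ℝ) → ℝ} (hψm : Measurable ψ) {C : ℝ} (hψb : ∀ x, |ψ x| ≤ C)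
    {g : (Fin n → ℝ) → ℝ} (hg : ∀ s ∈ Fintype.piFinset T,
      ∫ x, ψ x ∂(Measure.pi fun i => condLawAdd μ S X i (s i)) = g s) :
    ∫ s, g s ∂(Measure.pi fun i => μ.map (S · i))
      = ∫ x, ψ x ∂(Measure.pi fun i => μ.map ((S + X) · i)) := by
  have hSim (i : Fin n) : Measurable (S · i) := by fun_prop
  have hlaw (i : Fin n) : μ.map (S · i) = ∑ t ∈ T i, μ ((S · i) ⁻¹' {t}) • Measure.dirac t :=
    map_eq_sum_dirac (hSim i) (hT i)
  have hlaw' (i : Fin n) :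
      μ.map ((S + X) · i) = ∑ t ∈ T i, μ ((S · i) ⁻¹' {t}) • condLawAdd μ S X i t := by
    rw [map_eq_sum_smul_map_cond (hSim i) (hT i) (by fun_prop)]
    refine Finset.sum_congr rfl fun t _ => ?_
    rw [condLawAdd, ← map_add_cond_preimage_singleton (hSim i) (by fun_prop)]
    rfl
  have hfin : ∀ s ∈ Fintype.piFinset T, ∏ i, μ ((S · i) ⁻¹' {s i}) ≠ ⊤ := fun s _ =>
    ENNReal.prod_ne_top fun i _ => measure_ne_top _ _
  rw [Measure.pi_finset_sum hlaw, Measure.pi_finset_sum hlaw']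
  simp only [Measure.pi_dirac]
  rw [integral_finset_sum_smul_measure hfin fun s _ => integrable_dirac enorm_lt_top,
    integral_finset_sum_smul_measure hfin fun s _ =>
      Integrable.of_bound hψm.aestronglyMeasurable C (ae_of_all _ hψb)]
  exact Finset.sum_congr rfl fun s hs => by rw [integral_dirac, hg s hs]

theorem IsNSMD.add_of_cond [IsProbabilityMeasure μ] (hS : IsNSMD μ S) (hSm : Measurable S)
    (hXm : Measurable X) (hSfin : (range S).Finite)
    (hcond : ∀ s, μ (S ⁻¹' {s}) ≠ 0 → IsNSMD μ[|S ⁻¹' {s}] X)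
    (hdep : ∀ s, μ (S ⁻¹' {s}) ≠ 0 → ∀ i,
      (μ[|S ⁻¹' {s}]).map (X · i) = (μ[|(S · i) ⁻¹' {s i}]).map (X · i))
    (hmono : ∀ i, AntitoneOn (fun t => ⇑(cdf ((μ[|(S · i) ⁻¹' {t}]).map (X · i))))
      {t | μ ((S · i) ⁻¹' {t}) ≠ 0}) :
    IsNSMD μ (S + X) := by
  intro ψ hψm ⟨C, hψb⟩ hψ
  have hSifin (i : Fin n) : (range (S · i)).Finite :=
    (hSfin.image (· i)).subset (by rintro _ ⟨ω, rfl⟩; exact ⟨S ω, mem_range_self ω, rfl⟩)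
  choose T hT hT_ae using fun i => exists_finset_ae_mem_iff_measure_ne_zero (μ := μ) (hSifin i)
  have hκ_prob (i : Fin n) :
      ∀ t ∈ T i, IsProbabilityMeasure ((μ[|(S · i) ⁻¹' {t}]).map (X · i)) := fun t ht =>
    have := cond_isProbabilityMeasure ((hT i t).1 ht)
    Measure.isProbabilityMeasure_map (by fun_prop)
  have hζ_prob (i : Fin n) : ∀ t ∈ T i, IsProbabilityMeasure (condLawAdd μ S X i t) := fun t ht =>
    have := hκ_prob i t ht
    Measure.isProbabilityMeasure_map (measurable_const_add t).aemeasurable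
  obtain ⟨g, hg, hgm, hg_bdd, hg_eq⟩ := exists_isSupermodular_extension
    (fun i => (hT_ae i).exists.elim fun _ h => ⟨_, h⟩) hζ_prob
    (fun i => antitoneOn_cdf_map_const_add (hκ_prob i) ((hmono i).mono fun t ht => (hT i t).1 ht))
    hψ hψm hψb
  calc ∫ ω, ψ ((S + X) ω) ∂μ ≤ ∫ ω, g (S ω) ∂μ :=
        integral_comp_add_le_integral_comp hSm hXm hSfin hcond hdep hψm hψb hψ hgm fun s hs =>
          hg_eq s fun i => (hT i _).2 fun h0 =>
            hs (measure_mono_null (fun ω (h : S ω = s) => congrFun h i) h0)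
    _ ≤ ∫ s, g s ∂(Measure.pi fun i => μ.map (S · i)) := hS g hgm ⟨C, hg_bdd⟩ hg
    _ = _ := integral_pi_map_eq_integral_pi_map_add hSm hXm hT_ae hψm hψb fun s hs =>
        hg_eq s fun i => Fintype.mem_piFinset.1 hs i

lemma map_cond_eq_of_map_cond_restrict_eq (hXm : Measurable X)
    (hdep : ∀ I : Finset (Fin n), ∀ s : Fin n → ℝ, μ {ω | S ω = s} ≠ 0 →
      Measure.map (fun ω (i : {i : Fin n // i ∈ I}) => X ω i.1) (μ[|{ω | S ω = s}])
        = Measure.map (fun ω (i : {i : Fin n // i ∈ I}) => X ω i.1)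
          (μ[|{ω | ∀ i ∈ I, S ω i = s i}]))
    (s : Fin n → ℝ) (hs : μ (S ⁻¹' {s}) ≠ 0) (i : Fin n) :
    (μ[|S ⁻¹' {s}]).map (X · i) = (μ[|(S · i) ⁻¹' {s i}]).map (X · i) := by
  have h := congrArg (Measure.map fun v : {j // j ∈ ({i} : Finset (Fin n))} → ℝ =>
    v ⟨i, Finset.mem_singleton_self i⟩) (hdep {i} s hs)
  rwa [Measure.map_map (measurable_pi_apply _) (by fun_prop),
    Measure.map_map (measurable_pi_apply _) (by fun_prop), setOf_forall_mem_singleton_eq] at h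

lemma antitoneOn_cdf_map_cond_of_integral_mono [IsFiniteMeasure μ] (hXm : Measurable X)
    (hsi : ∀ I : Finset (Fin n), ∀ s s' : Fin n → ℝ, (∀ i ∈ I, s i ≤ s' i) →
      μ {ω | ∀ i ∈ I, S ω i = s i} ≠ 0 → μ {ω | ∀ i ∈ I, S ω i = s' i} ≠ 0 →
      ∀ φ : ({i : Fin n // i ∈ I} → ℝ) → ℝ, Monotone φ → (∃ C, ∀ v, |φ v| ≤ C) →
        ∫ ω, φ (fun i => X ω i.1) ∂(μ[|{ω | ∀ i ∈ I, S ω i = s i}])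
          ≤ ∫ ω, φ (fun i => X ω i.1) ∂(μ[|{ω | ∀ i ∈ I, S ω i = s' i}]))
    (i : Fin n) :
    AntitoneOn (fun t => ⇑(cdf ((μ[|(S · i) ⁻¹' {t}]).map (X · i))))
      {t | μ ((S · i) ⁻¹' {t}) ≠ 0} := by
  intro t ht t' ht' htt'
  have hXi : Measurable (X · i) := by fun_prop
  have := cond_isProbabilityMeasure ht
  have := cond_isProbabilityMeasure ht'
  have := Measure.isProbabilityMeasure_map (μ := μ[|(S · i) ⁻¹' {t}]) hXi.aemeasurable
  have := Measure.isProbabilityMeasure_map (μ := μ[|(S · i) ⁻¹' {t'}]) hXi.aemeasurable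
  refine cdf_le_cdf_of_integral_le fun φ hφ ⟨C, hC⟩ => ?_
  rw [integral_map hXi.aemeasurable hφ.measurable.aestronglyMeasurable,
    integral_map hXi.aemeasurable hφ.measurable.aestronglyMeasurable]
  have h := hsi {i} (fun _ => t) (fun _ => t') (fun _ _ => htt')
    (by rwa [setOf_forall_mem_singleton_eq]) (by rwa [setOf_forall_mem_singleton_eq])
    (fun v => φ (v ⟨i, Finset.mem_singleton_self i⟩)) (fun v w hvw => hφ (hvw _))
    ⟨C, fun v => hC _⟩
  rwa [setOf_forall_mem_singleton_eq, setOf_forall_mem_singleton_eq] at h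

end PartialSums

theorem partial_sums_NSMD {Ω : Type*} [MeasurableSpace Ω] (μ : Measure Ω)
    [IsProbabilityMeasure μ]
    (n m : ℕ) (X : ℕ → Ω → Fin n → ℝ)
    (hXmeas : ∀ k, Measurable (X k)) (hXfin : ∀ k, (Set.range (X k)).Finite)
    (S : ℕ → Ω → Fin n → ℝ)
    (hS : ∀ k ω i, S k ω i = ∑ ν ∈ Finset.Icc 1 k, X ν ω i)
    -- (i) conditional negative supermodular dependence
    (hNSMD : ∀ k ∈ Finset.Icc 1 m, ∀ s : Fin n → ℝ,
      μ {ω | S (k - 1) ω = s} ≠ 0 → IsNSMD (μ[|{ω | S (k - 1) ω = s}]) (X k))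
    -- (ii) the conditional law of `X_I^(k)` given `S^(k-1)` depends only on `S_I^(k-1)`
    (hdep : ∀ k ∈ Finset.Icc 1 m, ∀ I : Finset (Fin n), ∀ s : Fin n → ℝ,
      μ {ω | S (k - 1) ω = s} ≠ 0 →
      Measure.map (fun ω (i : {i : Fin n // i ∈ I}) => X k ω i.1)
          (μ[|{ω | S (k - 1) ω = s}])
        = Measure.map (fun ω (i : {i : Fin n // i ∈ I}) => X k ω i.1)
          (μ[|{ω | ∀ i ∈ I, S (k - 1) ω i = s i}]))
    -- (iii) conditional stochastic monotonicity
    (hsi : ∀ k ∈ Finset.Icc 1 m, ∀ I : Finset (Fin n), ∀ s s' : Fin n → ℝ,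
      (∀ i ∈ I, s i ≤ s' i) →
      μ {ω | ∀ i ∈ I, S (k - 1) ω i = s i} ≠ 0 →
      μ {ω | ∀ i ∈ I, S (k - 1) ω i = s' i} ≠ 0 →
      ∀ φ : ({i : Fin n // i ∈ I} → ℝ) → ℝ, Monotone φ → (∃ C, ∀ v, |φ v| ≤ C) →
        ∫ ω, φ (fun i => X k ω i.1) ∂(μ[|{ω | ∀ i ∈ I, S (k - 1) ω i = s i}])
          ≤ ∫ ω, φ (fun i => X k ω i.1) ∂(μ[|{ω | ∀ i ∈ I, S (k - 1) ω i = s' i}])) :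
    ∀ k ∈ Finset.Icc 1 m, IsNSMD μ (S k) := by
  have hS0 : S 0 = 0 := funext fun ω => funext fun i => by simp [hS]
  have hSsucc (k : ℕ) : S (k + 1) = S k + X (k + 1) :=
    funext fun ω => funext fun i => by simp [hS, Finset.sum_Icc_succ_top]
  have hSm (k : ℕ) : Measurable (S k) ∧ (range (S k)).Finite := by
    induction k with
    | zero => exact hS0 ▸ ⟨measurable_const, (finite_singleton 0).subset range_const_subset⟩
    | succ k ih =>
      rw [hSsucc]
      refine ⟨ih.1.add (hXmeas _), (ih.2.image2 (· + ·) (hXfin (k + 1))).subset ?_⟩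
      rintro _ ⟨ω, rfl⟩
      exact mem_image2_of_mem (mem_range_self ω) (mem_range_self ω)
  suffices ∀ k ≤ m, IsNSMD μ (S k) from fun k hk => this k (Finset.mem_Icc.1 hk).2
  intro k hk
  induction k with
  | zero => exact hS0 ▸ isNSMD_const μ 0
  | succ k ih =>
    have hk' : k + 1 ∈ Finset.Icc 1 m := Finset.mem_Icc.2 ⟨by omega, hk⟩
    have hNSMD := hNSMD _ hk'
    have hdep := hdep _ hk'
    have hsi := hsi _ hk'
    simp only [Nat.add_sub_cancel] at hNSMD hdep hsi
    rw [hSsucc]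
    exact (ih (by omega)).add_of_cond (hSm k).1 (hXmeas _) (hSm k).2 hNSMD
      (map_cond_eq_of_map_cond_restrict_eq (hXmeas _) hdep)
      (antitoneOn_cdf_map_cond_of_integral_mono (hXmeas _) hsi)
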